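/- For the Vilenkin-Fejér kernels at e₀ = (1,0,0,…): |K_{M_k}^ψ(e₀)| = 1/(2 sin(π/m₀)) ≥ 1/2 for every k ∈ ℕ₊; hence condition (A4), lim_n sup_{G_m \ I_N} |Φ_n| = 0, fails for the family {K_{M_k}^ψ}. -/

import Mathlib

open MeasureTheory Filter Complex

/-- The (bounded) Vilenkin group `G_m = ∏_k Z_{m_k}`. -/
abbrev VilGroup (m : ℕ → ℕ) : Type := Π k, ZMod (m k)

/-- The generalized powers `M_0 = 1`, `M_{k+1} = m_k M_k`. -/
def Mgen (m : ℕ → ℕ) : ℕ → ℕ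
  | 0 => 1
  | k + 1 => m k * Mgen m k

/-- The `j`-th digit of `n` in the `M`-adic (mixed radix) number system. -/
def vDigit (m : ℕ → ℕ) (n j : ℕ) : ℕ := (n / Mgen m j) % m j

/-- The generalized Rademacher functions `r_k(x) = exp(2πi x_k / m_k)`. -/
noncomputable def rademacher (m : ℕ → ℕ) (k : ℕ) (x : VilGroup m) : ℂ :=
  Complex.exp (2 * Real.pi * Complex.I * ((x k).val : ℂ) / (m k : ℂ))

/-- The Vilenkin functions `ψ_n = ∏_k r_k^{n_k}`. -/
noncomputable def vilenkin (m : ℕ → ℕ) (n : ℕ) (x : VilGroup m) : ℂ :=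
  ∏ j ∈ Finset.range (n + 1), (rademacher m j x) ^ (vDigit m n j)

/-- The Vilenkin-Dirichlet kernels `D_k^ψ = ∑_{j<k} ψ_j`. -/
noncomputable def vilenkinDirichlet (m : ℕ → ℕ) (k : ℕ) (x : VilGroup m) : ℂ :=
  ∑ j ∈ Finset.range k, vilenkin m j x

/-- The Vilenkin-Fejér kernels `K_n^ψ = (1/n) ∑_{k<n} D_k^ψ`. -/
noncomputable def vilenkinFejer (m : ℕ → ℕ) (n : ℕ) (x : VilGroup m) : ℂ :=
  (1 / n) * ∑ k ∈ Finset.range n, vilenkinDirichlet m k x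

/-- The cylinder `I_N = I_N(0) = {y : y_0 = ⋯ = y_{N-1} = 0}`. -/
def cylV (m : ℕ → ℕ) (N : ℕ) : Set (VilGroup m) := {y | ∀ j < N, y j = 0}

/-- The Vilenkin interval `I_N(x)`. -/
def cylVAt (m : ℕ → ℕ) (N : ℕ) (x : VilGroup m) : Set (VilGroup m) :=
  {y | ∀ j < N, y j = x j}

/-- `μ` is the normalized Haar measure on `G_m`, characterized by
`μ(I_N(x)) = 1/M_N` for every cylinder. -/
def IsVilHaar (m : ℕ → ℕ) (μ : Measure (VilGroup m)) : Prop :=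
  ∀ (N : ℕ) (x : VilGroup m), μ (cylVAt m N x) = (Mgen m N : ENNReal)⁻¹

/-- The `k`-th Vilenkin-Fourier coefficient. -/
noncomputable def vCoef (m : ℕ → ℕ) (μ : Measure (VilGroup m))
    (f : VilGroup m → ℂ) (k : ℕ) : ℂ :=
  ∫ x, f x * (starRingEnd ℂ) (vilenkin m k x) ∂μ

/-- The partial sums `S_n^ψ f` of the Vilenkin-Fourier series. -/
noncomputable def vPartialSum (m : ℕ → ℕ) (μ : Measure (VilGroup m))
    (f : VilGroup m → ℂ) (n : ℕ) (x : VilGroup m) : ℂ :=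
  ∑ k ∈ Finset.range n, vCoef m μ f k * vilenkin m k x

/-- The Vilenkin-Fejér means `σ_n^ψ f = (1/n) ∑_{k<n} S_k^ψ f`. -/
noncomputable def vFejerMean (m : ℕ → ℕ) (μ : Measure (VilGroup m))
    (f : VilGroup m → ℂ) (n : ℕ) (x : VilGroup m) : ℂ :=
  (1 / n) * ∑ k ∈ Finset.range n, vPartialSum m μ f k x

/-- The element `e₀ = (1,0,0,…) ∈ G_m`. -/
noncomputable def e0 (m : ℕ → ℕ) : VilGroup m := fun j => if j = 0 then 1 else 0

/-!
At `e₀` only the first Rademacher function is nontrivial, so `ψ_n(e₀) = ζⁿ` with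
`ζ = exp(2πi/m₀)` a primitive `m₀`-th root of unity. Since `m₀ ∣ M_k`, the Cesàro mean of
the geometric partial sums of `ζ` over a full number `M_k` of periods is `1/(1 - ζ)`, whose
modulus is `1/(2 sin(π/m₀)) ≥ 1/2`. As `e₀ ∉ I_N` for `N ≥ 1`, the suprema in (A4) stay
above `1/2`.
-/

open Finset

theorem Mgen_ne_zero {m : ℕ → ℕ} (hm : ∀ k, m k ≠ 0) (k : ℕ) : Mgen m k ≠ 0 := by
  induction k with
  | zero => simp [Mgen]
  | succ k ih => exact mul_ne_zero (hm k) ih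

theorem dvd_Mgen {m : ℕ → ℕ} {k : ℕ} (hk : 1 ≤ k) : m 0 ∣ Mgen m k := by
  induction k, hk using Nat.le_induction with
  | base => simp [Mgen]
  | succ k _ ih => exact ih.mul_left _

theorem norm_rademacher (m : ℕ → ℕ) (k : ℕ) (x : VilGroup m) :
    ‖rademacher m k x‖ = 1 := by
  have h : 2 * Real.pi * I * ((x k).val : ℂ) / (m k : ℂ) =
      ((2 * Real.pi * (x k).val / m k : ℝ) : ℂ) * I := by
    push_cast; ring
  rw [rademacher, h, Complex.norm_exp_ofReal_mul_I]

theorem rademacher_pow_self (m : ℕ → ℕ) (k : ℕ) (x : VilGroup m) :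
    rademacher m k x ^ m k = 1 := by
  rcases eq_or_ne (m k) 0 with h | h
  · simp [h]
  · have hm : (m k : ℂ) ≠ 0 := Nat.cast_ne_zero.mpr h
    rw [rademacher, ← exp_nat_mul, mul_div_cancel₀ _ hm, mul_comm,
      exp_nat_mul_two_pi_mul_I]

theorem norm_vilenkin (m : ℕ → ℕ) (n : ℕ) (x : VilGroup m) : ‖vilenkin m n x‖ = 1 := by
  simp [vilenkin, norm_rademacher]

theorem norm_vilenkinDirichlet_le (m : ℕ → ℕ) (k : ℕ) (x : VilGroup m) :
    ‖vilenkinDirichlet m k x‖ ≤ k := by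
  simpa [vilenkinDirichlet, norm_vilenkin] using norm_sum_le (range k) (vilenkin m · x)

theorem norm_vilenkinFejer_le (m : ℕ → ℕ) (n : ℕ) (x : VilGroup m) :
    ‖vilenkinFejer m n x‖ ≤ n := by
  have hsum : ‖∑ k ∈ range n, vilenkinDirichlet m k x‖ ≤ n * n := by
    simpa using norm_sum_le_of_le (range n) fun k hk =>
      (norm_vilenkinDirichlet_le m k x).trans (Nat.cast_le.mpr (mem_range.mp hk).le)
  rcases Nat.eq_zero_or_pos n with rfl | hn
  · simp [vilenkinFejer]
  · have hn' : (0 : ℝ) < n := Nat.cast_pos.mpr hn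
    rw [vilenkinFejer, norm_mul, norm_div, norm_one, Complex.norm_natCast, div_mul_eq_mul_div,
      one_mul, div_le_iff₀ hn']
    exact hsum

theorem iSup_norm_vilenkinFejer_ge {m : ℕ → ℕ} {s : Set (VilGroup m)} {x : VilGroup m}
    (hx : x ∈ s) (n : ℕ) : ‖vilenkinFejer m n x‖ ≤ ⨆ y : s, ‖vilenkinFejer m n y‖ :=
  le_ciSup (f := fun y : s => ‖vilenkinFejer m n y‖)
    ⟨n, by rintro _ ⟨y, rfl⟩; exact norm_vilenkinFejer_le m n y⟩ ⟨x, hx⟩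

theorem vilenkin_eq_rademacher_pow {m : ℕ → ℕ} {x : VilGroup m} (hx : ∀ j ≠ 0, x j = 0)
    (n : ℕ) : vilenkin m n x = rademacher m 0 x ^ n := by
  have hdigit : vDigit m n 0 = n % m 0 := by simp [vDigit, Mgen]
  rw [vilenkin, prod_eq_single_of_mem 0 (mem_range.mpr n.succ_pos) fun j _ hj => by
      simp [rademacher, hx j hj],
    hdigit, ← pow_eq_pow_mod n (rademacher_pow_self m 0 x)]

theorem cesaro_geom_sum_of_pow_eq_one {K : Type*} [Field K] {r : K} {n : ℕ} (hr : r ≠ 1)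
    (hrn : r ^ n = 1) (hn : (n : K) ≠ 0) :
    1 / n * ∑ k ∈ range n, ∑ j ∈ range k, r ^ j = 1 / (1 - r) := by
  have hsum : ∑ k ∈ range n, ∑ j ∈ range k, r ^ j = n / (1 - r) := by
    simp_rw [geom_sum_eq hr, ← sum_div, sum_sub_distrib, geom_sum_eq hr, hrn]
    simp [← neg_div_neg_eq _ (r - 1)]
  rw [hsum, div_mul_div_comm, one_mul, div_mul_cancel_left₀ hn, one_div]

theorem rademacher_e0 {m : ℕ → ℕ} (hm0 : 1 < m 0) :
    rademacher m 0 (e0 m) = exp (2 * Real.pi * I / m 0) := by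
  have : Fact (1 < m 0) := ⟨hm0⟩
  simp [rademacher, e0, ZMod.val_one]

theorem vilenkinFejer_e0 {m : ℕ → ℕ} (hm : ∀ k, m k ≠ 0) (hm0 : 1 < m 0) {k : ℕ}
    (hk : 1 ≤ k) :
    vilenkinFejer m (Mgen m k) (e0 m) = 1 / (1 - exp (2 * Real.pi * I / m 0)) := by
  have hζ := Complex.isPrimitiveRoot_exp (m 0) (hm 0)
  obtain ⟨c, hc⟩ := dvd_Mgen (m := m) hk
  have hζM : exp (2 * Real.pi * I / m 0) ^ Mgen m k = 1 := by
    rw [hc, pow_mul, hζ.pow_eq_one, one_pow]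
  have he0 : ∀ j ≠ 0, e0 m j = 0 := fun j hj => if_neg hj
  simp_rw [vilenkinFejer, vilenkinDirichlet, vilenkin_eq_rademacher_pow he0, rademacher_e0 hm0]
  exact cesaro_geom_sum_of_pow_eq_one (hζ.ne_one hm0) hζM
    (Nat.cast_ne_zero.mpr (Mgen_ne_zero hm k))

theorem norm_one_sub_exp_two_pi_I_div {n : ℕ} (hn : 1 ≤ n) :
    ‖1 - exp (2 * Real.pi * I / n)‖ = 2 * Real.sin (Real.pi / n) := by
  have hn' : (1 : ℝ) ≤ n := Nat.one_le_cast.mpr hn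
  have harg : 2 * Real.pi * I / n = I * ((2 * Real.pi / n : ℝ) : ℂ) := by
    push_cast; ring
  have hsin : 0 ≤ Real.sin (Real.pi / n) :=
    Real.sin_nonneg_of_nonneg_of_le_pi (by positivity) (div_le_self Real.pi_pos.le hn')
  rw [norm_sub_rev, harg, Complex.norm_exp_I_mul_ofReal_sub_one, mul_div_assoc,
    mul_div_cancel_left₀ _ two_ne_zero,
    Real.norm_of_nonneg (mul_nonneg zero_le_two hsin)]

theorem e0_notMem_cylV {m : ℕ → ℕ} (hm0 : 1 < m 0) {N : ℕ} (hN : 1 ≤ N) :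
    e0 m ∉ cylV m N := by
  have : Fact (1 < m 0) := ⟨hm0⟩
  intro h
  simpa [e0] using h 0 hN

theorem vilenkinFejer_A4_fails_general
    (m : ℕ → ℕ) (hm : ∀ k, 2 ≤ m k) :
    (∀ k : ℕ, 1 ≤ k →
      ‖vilenkinFejer m (Mgen m k) (e0 m)‖ = 1 / (2 * Real.sin (Real.pi / m 0)) ∧
        (1 : ℝ) / 2 ≤ ‖vilenkinFejer m (Mgen m k) (e0 m)‖) ∧
      ∀ N : ℕ, 1 ≤ N →
        ¬ Tendsto
            (fun k : ℕ => ⨆ x : ((cylV m N)ᶜ : Set (VilGroup m)),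
              ‖vilenkinFejer m (Mgen m k) x‖)
            atTop (nhds 0) := by
  have hm0 : 1 < m 0 := hm 0
  have hne : ∀ k, m k ≠ 0 := fun k => (zero_lt_two.trans_le (hm k)).ne'
  have hnorm : ∀ k, 1 ≤ k →
      ‖vilenkinFejer m (Mgen m k) (e0 m)‖ = 1 / (2 * Real.sin (Real.pi / m 0)) := fun k hk => by
    rw [vilenkinFejer_e0 hne hm0 hk, norm_div, norm_one, norm_one_sub_exp_two_pi_I_div hm0.le]
  have hsin : 0 < Real.sin (Real.pi / m 0) :=
    Real.sin_pos_of_pos_of_lt_pi (by positivity)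
      (div_lt_self Real.pi_pos (Nat.one_lt_cast.mpr hm0))
  have hhalf : (1 : ℝ) / 2 ≤ 1 / (2 * Real.sin (Real.pi / m 0)) :=
    one_div_le_one_div_of_le (by positivity) (by linarith [Real.sin_le_one (Real.pi / m 0)])
  refine ⟨fun k hk => ⟨hnorm k hk, hnorm k hk ▸ hhalf⟩, fun N hN hT => ?_⟩
  have hbound : ∀ᶠ k in atTop, (1 : ℝ) / 2 ≤
      ⨆ x : ((cylV m N)ᶜ : Set (VilGroup m)), ‖vilenkinFejer m (Mgen m k) x‖ :=
    eventually_atTop.mpr ⟨1, fun k hk => (hnorm k hk ▸ hhalf).trans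
      (iSup_norm_vilenkinFejer_ge (e0_notMem_cylV hm0 hN) _)⟩
  linarith [ge_of_tendsto hT hbound]

/-- At `e₀ = (1,0,0,…)` one has `|K_{M_k}^ψ(e₀)| = 1/(2 sin(π/m₀)) ≥ 1/2` for every
`k ∈ ℕ₊`; hence condition (A4), `lim_n sup_{G_m \ I_N} |Φ_n| = 0`, fails for the
family of Vilenkin-Fejér kernels `{K_{M_k}^ψ}`. -/
theorem vilenkinFejer_A4_fails
    (m : ℕ → ℕ) (hm : ∀ k, 2 ≤ m k) (hbd : ∃ B, ∀ k, m k ≤ B) :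
    (∀ k : ℕ, 1 ≤ k →
      ‖vilenkinFejer m (Mgen m k) (e0 m)‖ = 1 / (2 * Real.sin (Real.pi / m 0)) ∧
        (1 : ℝ) / 2 ≤ ‖vilenkinFejer m (Mgen m k) (e0 m)‖) ∧
      ∀ N : ℕ, 1 ≤ N →
        ¬ Tendsto
            (fun k : ℕ => ⨆ x : ((cylV m N)ᶜ : Set (VilGroup m)),
              ‖vilenkinFejer m (Mgen m k) x‖)
            atTop (nhds 0) :=
  vilenkinFejer_A4_fails_general m hm
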